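/- Let n_x, n_y be coprime positive integers. Then the set of pairs (t₁, t₂) with 0 ≤ t₁ < t₂ ≤ π, cos(n_x t₁) = cos(n_x t₂), and cos(n_y t₁) = cos(n_y t₂) is finite and has exactly (n_x − 1)(n_y − 1)/2 elements. -/

import Mathlib

open Real Finset

/-!
`cos (n t₁) = cos (n t₂)` means that `n (t₂ - t₁)` or `n (t₂ + t₁)` lies in `2πℤ`. For
`0 ≤ t₁ < t₂ ≤ π` both numbers `t₂ ∓ t₁` lie in `(0, 2π)`, and coprimality of the frequencies
forbids a common nonzero period shorter than `2π`, so one frequency must take the difference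
and the other the sum. Hence the double points are exactly
`(π |a/nx - b/ny|, π (a/nx + b/ny))` for the lattice points `a, b > 0` with `a/nx + b/ny < 1`.
These are half of the lattice points of the box `(0, nx) × (0, ny)`: the reflection
`(a, b) ↦ (nx - a, ny - b)` exchanges the two sides of the diagonal, and coprimality keeps
lattice points off the diagonal.
-/

section

variable {p q : ℤ}

lemma mul_ne_mul_of_isCoprime (hpq : IsCoprime p q) {a : ℤ} (ha : 0 < a) (hap : a < p) (b : ℤ) :
    a * q ≠ b * p := by
  intro h
  have hdvd : p ∣ a := hpq.dvd_of_dvd_mul_right ⟨b, by rw [h, mul_comm]⟩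
  exact (Int.le_of_dvd ha hdvd).not_gt hap

noncomputable def crossingIndices (p q : ℤ) : Finset (ℤ × ℤ) :=
  (Ioo 0 p ×ˢ Ioo 0 q).filter fun ab => ab.1 * q + ab.2 * p < p * q

lemma mem_crossingIndices (hp : 0 < p) (hq : 0 < q) {ab : ℤ × ℤ} :
    ab ∈ crossingIndices p q ↔ 0 < ab.1 ∧ 0 < ab.2 ∧ ab.1 * q + ab.2 * p < p * q := by
  simp only [crossingIndices, mem_filter, mem_product, mem_Ioo]
  constructor
  · rintro ⟨⟨⟨ha, -⟩, hb, -⟩, h⟩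
    exact ⟨ha, hb, h⟩
  · rintro ⟨ha, hb, h⟩
    exact ⟨⟨⟨ha, by nlinarith⟩, hb, by nlinarith⟩, h⟩

lemma mem_crossingIndices_swap (hp : 0 < p) (hq : 0 < q) {a b : ℤ} :
    (b, a) ∈ crossingIndices q p ↔ (a, b) ∈ crossingIndices p q := by
  simp only [mem_crossingIndices hp hq, mem_crossingIndices hq hp, mul_comm q p]
  constructor <;> rintro ⟨h₁, h₂, h₃⟩ <;> exact ⟨h₂, h₁, by linarith⟩

lemma two_mul_card_crossingIndices (hp : 0 < p) (hq : 0 < q) (hpq : IsCoprime p q) :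
    2 * (#(crossingIndices p q) : ℤ) = (p - 1) * (q - 1) := by
  set box := Ioo 0 p ×ˢ Ioo 0 q
  have hbox : (#box : ℤ) = (p - 1) * (q - 1) := by
    rw [card_product, Int.card_Ioo, Int.card_Ioo, Nat.cast_mul, Int.toNat_of_nonneg (by omega),
      Int.toNat_of_nonneg (by omega), sub_zero, sub_zero]
  have hdiag {a b : ℤ} (ha : 0 < a) (hap : a < p) : a * q + b * p ≠ p * q := fun h =>
    mul_ne_mul_of_isCoprime hpq ha hap (q - b) (by linarith)
  have hreflect : #(box.filter fun ab => ¬ ab.1 * q + ab.2 * p < p * q) =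
      #(crossingIndices p q) := by
    refine card_nbij' (fun ab => (p - ab.1, q - ab.2)) (fun ab => (p - ab.1, q - ab.2))
      ?_ ?_ (fun _ _ => by simp) (fun _ _ => by simp)
    · rintro ⟨a, b⟩ hab
      simp only [box, coe_filter, Set.mem_ofPred_eq, mem_product, mem_Ioo, not_lt] at hab
      obtain ⟨⟨⟨ha, hap⟩, hb, hbq⟩, hle⟩ := hab
      simp only [crossingIndices, coe_filter, Set.mem_ofPred_eq, mem_product, mem_Ioo]
      refine ⟨⟨⟨by omega, by omega⟩, by omega, by omega⟩, ?_⟩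
      nlinarith [lt_of_le_of_ne hle (hdiag (b := b) ha hap).symm]
    · rintro ⟨a, b⟩ hab
      simp only [crossingIndices, coe_filter, Set.mem_ofPred_eq, mem_product, mem_Ioo] at hab
      obtain ⟨⟨⟨ha, hap⟩, hb, hbq⟩, hlt⟩ := hab
      simp only [box, coe_filter, Set.mem_ofPred_eq, mem_product, mem_Ioo, not_lt]
      exact ⟨⟨⟨by omega, by omega⟩, by omega, by omega⟩, by nlinarith⟩
  have hsplit := card_filter_add_card_filter_not (s := box) fun ab => ab.1 * q + ab.2 * p < p * q
  rw [hreflect] at hsplit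
  change #(crossingIndices p q) + #(crossingIndices p q) = #box at hsplit
  omega

noncomputable def crossingParam (p q : ℤ) (ab : ℤ × ℤ) : ℝ × ℝ :=
  (π * |(ab.1 / p - ab.2 / q : ℝ)|, π * (ab.1 / p + ab.2 / q : ℝ))

lemma crossingParam_swap (a b : ℤ) : crossingParam q p (b, a) = crossingParam p q (a, b) := by
  rw [crossingParam, crossingParam, abs_sub_comm, add_comm]

lemma intCast_div_add_intCast_div (hp : p ≠ 0) (hq : q ≠ 0) (a b : ℤ) :
    (a / p + b / q : ℝ) = ((a * q + b * p : ℤ) : ℝ) / ((p * q : ℤ) : ℝ) := by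
  push_cast
  field_simp

def arcDoublePoints (α β : ℝ) : Set (ℝ × ℝ) :=
  {t | 0 ≤ t.1 ∧ t.1 < t.2 ∧ t.2 ≤ π ∧ cos (α * t.1) = cos (α * t.2) ∧
    cos (β * t.1) = cos (β * t.2)}

lemma cos_mul_mul_pi_abs_sub (n a : ℤ) (hn : n ≠ 0) (y : ℝ) :
    cos (n * (π * |a / n - y|)) = cos (n * (π * (a / n + y))) := by
  have hn' : (n : ℝ) ≠ 0 := Int.cast_ne_zero.2 hn
  have habs : cos (n * (π * |a / n - y|)) = cos (n * (π * (a / n - y))) := by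
    rcases abs_choice (a / n - y : ℝ) with h | h <;> rw [h]
    rw [mul_neg, mul_neg, cos_neg]
  rw [habs, show n * (π * (a / n - y)) = a * π - n * π * y by field_simp,
    show n * (π * (a / n + y)) = n * π * y + a * π by field_simp; ring,
    cos_int_mul_pi_sub, cos_add_int_mul_pi]

lemma crossingParam_mem_arcDoublePoints (hp : 0 < p) (hq : 0 < q) {ab : ℤ × ℤ}
    (hab : ab ∈ crossingIndices p q) : crossingParam p q ab ∈ arcDoublePoints p q := by
  obtain ⟨a, b⟩ := ab
  obtain ⟨ha, hb, hlt⟩ := (mem_crossingIndices hp hq).1 hab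
  have hp' : (0 : ℝ) < p := Int.cast_pos.2 hp
  have hq' : (0 : ℝ) < q := Int.cast_pos.2 hq
  have hx : (0 : ℝ) < a / p := div_pos (Int.cast_pos.2 ha) hp'
  have hy : (0 : ℝ) < b / q := div_pos (Int.cast_pos.2 hb) hq'
  have hsum : (a / p + b / q : ℝ) < 1 := by
    rw [intCast_div_add_intCast_div hp.ne' hq.ne', div_lt_one (Int.cast_pos.2 (mul_pos hp hq)),
      Int.cast_lt]
    exact hlt
  rw [crossingParam]
  refine ⟨mul_nonneg pi_pos.le (abs_nonneg _), ?_, ?_, cos_mul_mul_pi_abs_sub p a hp.ne' _, ?_⟩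
  · exact mul_lt_mul_of_pos_left (abs_sub_lt_iff.2 ⟨by linarith, by linarith⟩) pi_pos
  · exact mul_le_of_le_one_right pi_pos.le hsum.le
  · rw [abs_sub_comm, add_comm]
    exact cos_mul_mul_pi_abs_sub q b hq.ne' _

lemma two_pi_le_of_mul_eq_of_mul_eq (hp : 0 < p) (hpq : IsCoprime p q) {s : ℝ} (hs : 0 < s)
    {k m : ℤ} (hk : p * s = 2 * k * π) (hm : q * s = 2 * m * π) : 2 * π ≤ s := by
  by_contra! hs₂
  have hp' : (0 : ℝ) < p := Int.cast_pos.2 hp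
  have hk₀ : 0 < k := Int.cast_pos.1 (by nlinarith [pi_pos] : (0 : ℝ) < k)
  have hkp : k < p := Int.cast_lt.1 (by nlinarith [pi_pos] : (k : ℝ) < p)
  have hkm : (k * q : ℝ) = m * p := by
    apply mul_right_cancel₀ two_pi_pos.ne'
    linear_combination p * hm - q * hk
  exact mul_ne_mul_of_isCoprime hpq hk₀ hkp m (by exact_mod_cast hkm)

lemma mem_crossingIndices_of_mul_sub_of_mul_add (hp : 0 < p) (hq : 0 < q) (hpq : IsCoprime p q)
    {t₁ t₂ : ℝ} (h₀ : 0 ≤ t₁) (h₁₂ : t₁ < t₂) (h₂ : t₂ ≤ π) {k m : ℤ}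
    (hk : p * (t₂ - t₁) = 2 * k * π) (hm : q * (t₂ + t₁) = 2 * m * π) :
    (k, m) ∈ crossingIndices p q ∧ crossingParam p q (k, m) = (t₁, t₂) := by
  have hp' : (0 : ℝ) < p := Int.cast_pos.2 hp
  have hq' : (0 : ℝ) < q := Int.cast_pos.2 hq
  have hk₀ : 0 < k := Int.cast_pos.1 (by nlinarith [pi_pos] : (0 : ℝ) < k)
  have hm₀ : 0 < m := Int.cast_pos.1 (by nlinarith [pi_pos] : (0 : ℝ) < m)
  have hd : t₂ - t₁ = 2 * π * (k / p) := by field_simp; linear_combination hk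
  have hs : t₂ + t₁ = 2 * π * (m / q) := by field_simp; linear_combination hm
  have ht₁ : t₁ = π * (m / q - k / p) := by linarith
  have ht₂ : t₂ = π * (k / p + m / q) := by linarith
  have hle : k * q + m * p ≤ p * q := by
    have : (k / p + m / q : ℝ) ≤ 1 :=
      le_of_mul_le_mul_left (by linarith : π * (k / p + m / q) ≤ π * 1) pi_pos
    rwa [intCast_div_add_intCast_div hp.ne' hq.ne', div_le_one (Int.cast_pos.2 (mul_pos hp hq)),
      Int.cast_le] at this
  have hkp : k < p := by nlinarith
  have hlt : k * q + m * p < p * q :=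
    lt_of_le_of_ne hle fun h => mul_ne_mul_of_isCoprime hpq hk₀ hkp (q - m) (by linarith)
  refine ⟨(mem_crossingIndices hp hq).2 ⟨hk₀, hm₀, hlt⟩, ?_⟩
  have hkm : (k / p : ℝ) - m / q ≤ 0 := by nlinarith [pi_pos]
  rw [crossingParam, abs_of_nonpos hkm, ht₁, ht₂]
  ring_nf

theorem arcDoublePoints_eq_image (hp : 0 < p) (hq : 0 < q) (hpq : IsCoprime p q) :
    arcDoublePoints p q = crossingParam p q '' crossingIndices p q := by
  ext ⟨t₁, t₂⟩
  constructor
  · rintro ⟨h₀, h₁₂, h₂, hcp, hcq⟩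
    dsimp only at h₀ h₁₂ h₂ hcp hcq
    rw [cos_eq_cos_iff] at hcp hcq
    obtain ⟨k, hk | hk⟩ := hcp <;> obtain ⟨m, hm | hm⟩ := hcq
    · have := two_pi_le_of_mul_eq_of_mul_eq hp hpq (sub_pos.2 h₁₂) (k := k) (m := m)
        (by linear_combination hk) (by linear_combination hm)
      linarith [pi_pos]
    · obtain ⟨hmem, heq⟩ := mem_crossingIndices_of_mul_sub_of_mul_add hp hq hpq h₀ h₁₂ h₂
        (k := k) (m := m) (by linear_combination hk) (by linear_combination hm)
      exact ⟨(k, m), hmem, heq⟩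
    · obtain ⟨hmem, heq⟩ := mem_crossingIndices_of_mul_sub_of_mul_add hq hp hpq.symm h₀ h₁₂ h₂
        (k := m) (m := k) (by linear_combination hm) (by linear_combination hk)
      exact ⟨(k, m), (mem_crossingIndices_swap hp hq).1 hmem, crossingParam_swap k m ▸ heq⟩
    · have := two_pi_le_of_mul_eq_of_mul_eq hp hpq (s := t₂ + t₁) (k := k) (m := m) (by linarith)
        (by linear_combination hk) (by linear_combination hm)
      linarith [pi_pos]
  · rintro ⟨ab, hab, hparam⟩
    exact hparam ▸ crossingParam_mem_arcDoublePoints hp hq hab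

lemma injOn_crossingParam (hp : 0 < p) (hq : 0 < q) (hpq : IsCoprime p q) :
    Set.InjOn (crossingParam p q) (crossingIndices p q) := by
  rintro ⟨a, b⟩ hab ⟨a', b'⟩ - h
  obtain ⟨ha, hb, hlt⟩ := (mem_crossingIndices hp hq).1 hab
  have hp' : (p : ℝ) ≠ 0 := Int.cast_ne_zero.2 hp.ne'
  have hq' : (q : ℝ) ≠ 0 := Int.cast_ne_zero.2 hq.ne'
  simp only [crossingParam, Prod.mk.injEq] at h
  have hsum := mul_left_cancel₀ pi_ne_zero h.2
  rcases abs_eq_abs.1 (mul_left_cancel₀ pi_ne_zero h.1) with hdiff | hdiff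
  · have ha' : (a : ℝ) / p = a' / p := by linarith
    have hb' : (b : ℝ) / q = b' / q := by linarith
    rw [div_left_inj' hp', Int.cast_inj] at ha'
    rw [div_left_inj' hq', Int.cast_inj] at hb'
    rw [ha', hb']
  · have hab' : (a : ℝ) / p = b' / q := by linarith
    rw [div_eq_div_iff hp' hq'] at hab'
    exact absurd (by exact_mod_cast hab') (mul_ne_mul_of_isCoprime hpq ha (by nlinarith) b')

end

theorem lissajous_arc_crossing_count
    (nx ny : ℕ) (hnx : 0 < nx) (hny : 0 < ny) (hcop : Nat.Coprime nx ny)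
    (S : Set (ℝ × ℝ))
    (hS : S = {p : ℝ × ℝ | 0 ≤ p.1 ∧ p.1 < p.2 ∧ p.2 ≤ π ∧
      Real.cos (nx * p.1) = Real.cos (nx * p.2) ∧
      Real.cos (ny * p.1) = Real.cos (ny * p.2)}) :
    S.Finite ∧ 2 * S.ncard = (nx - 1) * (ny - 1) := by
  have hp : (0 : ℤ) < nx := by exact_mod_cast hnx
  have hq : (0 : ℤ) < ny := by exact_mod_cast hny
  have hpq : IsCoprime (nx : ℤ) ny := Nat.isCoprime_iff_coprime.2 hcop
  have himage := arcDoublePoints_eq_image hp hq hpq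
  rw [Int.cast_natCast, Int.cast_natCast] at himage
  subst hS
  rw [← arcDoublePoints, himage]
  refine ⟨(crossingIndices _ _).finite_toSet.image _, ?_⟩
  rw [(injOn_crossingParam hp hq hpq).ncard_image, Set.ncard_coe_finset]
  have hcard := two_mul_card_crossingIndices hp hq hpq
  zify [hnx, hny]
  exact_mod_cast hcard
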